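/- Let k be a field of characteristic not two and s a three-dimensional simple Lie algebra over k with Killing form K. Then for all v, w ∈ s: K([v,w],[v,w]) = (1/2)(K(v,w)² − K(v,v)·K(w,w)). -/

import Mathlib

/-!
Write everything in coordinates for a basis `b₀, b₁, b₂` with structure constants
`⁅bᵢ, bⱼ⁆ = ∑ₗ cᵢⱼˡ bₗ`; then both sides are polynomials in the coordinates of `v, w` and the
`cᵢⱼˡ`. A simple Lie algebra is perfect, so every `ad x` is traceless. Together with
antisymmetry, tracelessness eliminates all but six structure constants, and the identity becomes
a polynomial identity in what remains.
-/

open LinearMap (trace)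

lemma LinearMap.trace_eq_sum_repr {R M ι : Type*} [CommRing R] [AddCommGroup M] [Module R M]
    [Fintype ι] (b : Module.Basis ι R M) (f : M →ₗ[R] M) :
    trace R M f = ∑ n, b.repr (f (b n)) n := by
  classical
  simp [LinearMap.trace_eq_matrix_trace R b, Matrix.trace, LinearMap.toMatrix_apply]

lemma LinearMap.BilinForm.apply_eq_sum_repr {R M ι : Type*} [CommRing R] [AddCommGroup M]
    [Module R M] [Fintype ι] (b : Module.Basis ι R M) (B : LinearMap.BilinForm R M) (x y : M) :
    B x y = ∑ i, ∑ j, b.repr x i * b.repr y j * B (b i) (b j) := by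
  classical
  conv_lhs => rw [← Matrix.toLinearMap₂_toMatrix₂ b b B]
  simp [LinearMap.toMatrix₂_apply, mul_assoc]

namespace LieAlgebra

variable {R L : Type*} [CommRing R] [LieRing L] [LieAlgebra R L]

lemma IsSimple.lie_top_eq_top [IsSimple R L] : ⁅(⊤ : LieIdeal R L), (⊤ : LieIdeal R L)⁆ = ⊤ := by
  refine lie_eq_self_of_isAtom_of_nonabelian ⊤ (IsSimple.isAtom_top R L) fun h ↦ ?_
  rw [lie_abelian_iff_equiv_lie_abelian LieIdeal.topEquiv] at h
  exact IsSimple.non_abelian R h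

lemma IsSimple.trace_ad_eq_zero [IsSimple R L] (x : L) : trace R L (ad R L x) = 0 :=
  LieModule.trace_toEnd_eq_zero_of_mem_lcs R L L le_rfl <| by
    simp [LieModule.lowerCentralSeries_succ, IsSimple.lie_top_eq_top]

variable {ι : Type*} (b : Module.Basis ι R L)

noncomputable def structureConstant (i j l : ι) : R := b.repr ⁅b i, b j⁆ l

@[simp]
lemma structureConstant_self (i l : ι) : structureConstant b i i l = 0 := by
  simp [structureConstant]

lemma structureConstant_swap (i j l : ι) :
    structureConstant b j i l = -structureConstant b i j l := by
  rw [structureConstant, ← lie_skew, map_neg]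
  rfl

variable [Fintype ι]

lemma repr_lie (x y : L) (l : ι) :
    b.repr ⁅x, y⁆ l = ∑ i, ∑ j, b.repr x i * b.repr y j * structureConstant b i j l := by
  conv_lhs => rw [← b.sum_repr x, ← b.sum_repr y]
  simp only [sum_lie, lie_sum, smul_lie, lie_smul, map_sum, map_smul,
    Finsupp.coe_finsetSum, Finsupp.coe_smul, Finset.sum_apply, Pi.smul_apply, smul_eq_mul,
    Finset.mul_sum, structureConstant]
  rw [Finset.sum_comm]
  exact Finset.sum_congr rfl fun i _ ↦ Finset.sum_congr rfl fun j _ ↦ by ring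

lemma trace_ad_basis (i : ι) : trace R L (ad R L (b i)) = ∑ n, structureConstant b i n n :=
  LinearMap.trace_eq_sum_repr b _

lemma killingForm_basis (i j : ι) :
    killingForm R L (b i) (b j) =
      ∑ n, ∑ r, structureConstant b j n r * structureConstant b i r n := by
  rw [killingForm_apply_apply, LinearMap.trace_eq_sum_repr b]
  refine Finset.sum_congr rfl fun n _ ↦ ?_
  conv_lhs => rw [LinearMap.comp_apply, ad_apply, ad_apply, ← b.sum_repr ⁅b j, b n⁆]
  simp only [lie_sum, lie_smul, map_sum, map_smul, Finsupp.coe_finsetSum, Finsupp.coe_smul,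
    Finset.sum_apply, Pi.smul_apply, smul_eq_mul, structureConstant]

theorem two_mul_killingForm_lie_lie_of_trace_ad_eq_zero (b : Module.Basis (Fin 3) R L)
    (htr : ∀ x, trace R L (ad R L x) = 0) (v w : L) :
    2 * killingForm R L ⁅v, w⁆ ⁅v, w⁆ =
      killingForm R L v w ^ 2 - killingForm R L v v * killingForm R L w w := by
  have h₁₀ := structureConstant_swap b 0 1
  have h₂₀ := structureConstant_swap b 0 2
  have h₂₁ := structureConstant_swap b 1 2
  have htr_basis (i : Fin 3) : ∑ n, structureConstant b i n n = 0 := by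
    rw [← trace_ad_basis, htr]
  have htr₀ := htr_basis 0
  have htr₁ := htr_basis 1
  have htr₂ := htr_basis 2
  simp only [Fin.sum_univ_three, structureConstant_self, h₁₀, h₂₀, h₂₁] at htr₀ htr₁ htr₂
  have e₀ : structureConstant b 0 2 2 = -structureConstant b 0 1 1 := by linear_combination htr₀
  have e₁ : structureConstant b 1 2 2 = structureConstant b 0 1 0 := by linear_combination htr₁
  have e₂ : structureConstant b 1 2 1 = -structureConstant b 0 2 0 := by linear_combination -htr₂
  rw [(killingForm R L).apply_eq_sum_repr b ⁅v, w⁆, (killingForm R L).apply_eq_sum_repr b v w,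
    (killingForm R L).apply_eq_sum_repr b v, (killingForm R L).apply_eq_sum_repr b w]
  simp only [killingForm_basis, repr_lie b, Fin.sum_univ_three, structureConstant_self,
    h₁₀, h₂₀, h₂₁, e₀, e₁, e₂]
  ring

end LieAlgebra

theorem killing_form_of_bracket_general (k : Type*) [Field k] (hchar : (2 : k) ≠ 0)
    (L : Type*) [LieRing L] [LieAlgebra k L]
    (hdim : Module.finrank k L = 3) [LieAlgebra.IsSimple k L] (v w : L) :
    killingForm k L ⁅v, w⁆ ⁅v, w⁆ =
      (killingForm k L v w ^ 2 - killingForm k L v v * killingForm k L w w) / 2 := by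
  have : Module.Finite k L := Module.finite_of_finrank_eq_succ hdim
  rw [eq_div_iff hchar, mul_comm]
  exact LieAlgebra.two_mul_killingForm_lie_lie_of_trace_ad_eq_zero
    (Module.finBasisOfFinrankEq k L hdim) LieAlgebra.IsSimple.trace_ad_eq_zero v w

/-- For a three-dimensional simple Lie algebra `s` over `k` (char ≠ 2) with Killing form `K`,
`K([v,w],[v,w]) = (1/2)·(K(v,w)² − K(v,v)·K(w,w))` for all `v, w ∈ s`. -/
theorem killing_form_of_bracket (k : Type*) [Field k] (hchar : (2 : k) ≠ 0)
    (L : Type*) [LieRing L] [LieAlgebra k L] [Module.Finite k L]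
    (hdim : Module.finrank k L = 3) [LieAlgebra.IsSimple k L] (v w : L) :
    killingForm k L ⁅v, w⁆ ⁅v, w⁆ =
      (killingForm k L v w ^ 2 - killingForm k L v v * killingForm k L w w) / 2 :=
  killing_form_of_bracket_general k hchar L hdim v w
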